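/- Let h̃ be a largest-lift of ξ ∈ BDRY(τ̃_n, δ). If h̃_1, h̃_2 ∈ MÖBIUS(τ̃_n, δ) with ∂h̃_1 = ∂h̃_2 = ξ, and c_1, c_2 ≥ 0 with c_1 + c_2 = 1 satisfy h̃ = c_1·h̃_1 + c_2·h̃_2 (pointwise), then h̃ = h̃_1 or h̃ = h̃_2. -/

import Mathlib

open scoped Classical

/-! ## Common definitions: the plane `B`, honeycombs, and Möbius honeycombs.

Following Knutson–Tao "The honeycomb model of GL_n(C) tensor products I" and
Hwang "Saturation of Newell–Littlewood numbers" (arXiv:2409.00233). -/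

/-- Points of `ℝ³`, written as triples. -/
abbrev Pt : Type := ℝ × ℝ × ℝ

/-- The plane `B = {(x,y,z) ∈ ℝ³ : x + y + z = 0}`. -/
def planeB (p : Pt) : Prop := p.1 + p.2.1 + p.2.2 = 0

/-- The lattice points `B_ℤ = {(x,y,z) ∈ ℤ³ : x + y + z = 0}` of the plane `B`. -/
def latticeB (p : Pt) : Prop :=
  (∃ m : ℤ, p.1 = (m : ℝ)) ∧ (∃ m : ℤ, p.2.1 = (m : ℝ)) ∧ (∃ m : ℤ, p.2.2 = (m : ℝ)) ∧ planeB p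

/-- The two kinds of vertices of the graph `Γ_∞`: `Ã`-vertices and `B̃`-vertices. -/
inductive VK : Type
  | A | B
deriving DecidableEq

/-- Vertices `Ã_{i,j}`, `B̃_{i,j}` (for `i j : ℤ`) of the graph `Γ_∞`. -/
structure Vtx : Type where
  k : VK
  i : ℤ
  j : ℤ
deriving DecidableEq

/-- `AmbEdge t h d` holds when `(t, h)` is a directed edge of `Γ_∞` with direction
`d` under the direction map:  `(Ã_{i,j}, B̃_{i,j}) ↦ (-1,1,0)`,
`(Ã_{i,j}, B̃_{i-1,j}) ↦ (1,0,-1)`, `(Ã_{i,j}, B̃_{i-1,j-1}) ↦ (0,-1,1)`. -/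
inductive AmbEdge : Vtx → Vtx → Pt → Prop where
  | ne (i j : ℤ) : AmbEdge ⟨VK.A, i, j⟩ ⟨VK.B, i, j⟩ (-1, 1, 0)
  | sw (i j : ℤ) : AmbEdge ⟨VK.A, i, j⟩ ⟨VK.B, i - 1, j⟩ (1, 0, -1)
  | se (i j : ℤ) : AmbEdge ⟨VK.A, i, j⟩ ⟨VK.B, i - 1, j - 1⟩ (0, -1, 1)

/-! ### `GL_n` honeycombs and Littlewood–Richardson coefficients -/

/-- The vertex set of the graph `Δ_n` of the `GL_n` honeycomb tinkertoy `τ_n`: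
`Ã_{i,j}` for `1 ≤ i < j ≤ n` and `B̃_{i,j}` for `0 ≤ i < j ≤ n`. -/
def inDelta (n : ℕ) (v : Vtx) : Prop :=
  (v.k = VK.A ∧ 1 ≤ v.i ∧ v.i < v.j ∧ v.j ≤ (n : ℤ)) ∨
  (v.k = VK.B ∧ 0 ≤ v.i ∧ v.i < v.j ∧ v.j ≤ (n : ℤ))

/-- A honeycomb: a configuration of the `GL_n` honeycomb tinkertoy `τ_n`, i.e. a map
from the vertices of `Δ_n` to the plane `B` such that along every edge `e` the
difference `h(head e) - h(tail e)` is a nonnegative multiple of the direction `d(e)`.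
(We normalize such maps to vanish off `Δ_n` so that they faithfully encode maps
`V_{Δ_n} → B`.) -/
def IsHoneycomb (n : ℕ) (f : Vtx → Pt) : Prop :=
  (∀ v, inDelta n v → planeB (f v)) ∧
  (∀ t h d, AmbEdge t h d → inDelta n t → inDelta n h →
    ∃ a : ℝ, 0 ≤ a ∧ f h - f t = a • d) ∧
  (∀ v, ¬ inDelta n v → f v = 0)

/-- The Littlewood–Richardson coefficient `c^λ_{μ,ν}` (the multiplicity of `V_λ` in
`V_μ ⊗ V_ν` for polynomial `GL_n(ℂ)`-representations), realized via the
Knutson–Tao honeycomb model: the number of lattice honeycombs with boundary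
`∂h = (μ^*, ν^*, λ)`, where `μ^* = (-μ_n, …, -μ_1)` and the boundary coordinates are:
`λ_i` is the `x`-coordinate of `h(B̃_{i-1,n})`, `μ_i` the `y`-coordinate of
`h(B̃_{n-i,n-i+1})`, `ν_i` the `z`-coordinate of `h(B̃_{0,i})` (`1 ≤ i ≤ n`). -/
noncomputable def lrCoef (n : ℕ) (lam mu nu : Fin n → ℤ) : ℕ :=
  Nat.card {f : Vtx → Pt // IsHoneycomb n f ∧
    (∀ i : Fin n, (f ⟨VK.B, (i : ℤ), (n : ℤ)⟩).1 = ((-(mu i.rev) : ℤ) : ℝ)) ∧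
    (∀ i : Fin n, (f ⟨VK.B, (n : ℤ) - (i : ℤ) - 1, (n : ℤ) - (i : ℤ)⟩).2.1
      = ((-(nu i.rev) : ℤ) : ℝ)) ∧
    (∀ i : Fin n, (f ⟨VK.B, 0, (i : ℤ) + 1⟩).2.2 = ((lam i : ℤ) : ℝ)) ∧
    (∀ v, inDelta n v → latticeB (f v))}

/-- `lam ∈ Par_n`: a weakly decreasing sequence of nonnegative integers. -/
def IsPartition (n : ℕ) (lam : Fin n → ℤ) : Prop :=
  (∀ i j : Fin n, i ≤ j → lam j ≤ lam i) ∧ ∀ i, 0 ≤ lam i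

/-- The Newell–Littlewood number
`N_{λ,μ,ν} = ∑_{α,β,γ ∈ Par_n} c^λ_{β,γ} c^μ_{γ,α} c^ν_{α,β}`. -/
noncomputable def nlNum (n : ℕ) (lam mu nu : Fin n → ℤ) : ℕ :=
  ∑ᶠ (a : Fin n → ℤ), ∑ᶠ (b : Fin n → ℤ), ∑ᶠ (c : Fin n → ℤ),
    if IsPartition n a ∧ IsPartition n b ∧ IsPartition n c then
      lrCoef n lam b c * lrCoef n mu c a * lrCoef n nu a b
    else 0

/-! ### Möbius honeycombs -/

/-- The vertex set of the graph `Γ̃_n`: all `Ã_{i,j}`, `B̃_{i,j}` with `0 ≤ i ≤ n`. -/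
def inGamma (n : ℕ) (v : Vtx) : Prop := 0 ≤ v.i ∧ v.i ≤ (n : ℤ)

/-- The generating relation of the vertex equivalence `∼` on `Γ̃_n`:
`Ã_{i,j} ∼ B̃_{n-i, j-i+2n}` and `B̃_{i,j} ∼ Ã_{n-i, j-i+2n}`. -/
def vBase (n : ℕ) (v w : Vtx) : Prop :=
  (v.k = VK.A ∧ w = ⟨VK.B, (n : ℤ) - v.i, v.j - v.i + 2 * (n : ℤ)⟩) ∨
  (v.k = VK.B ∧ w = ⟨VK.A, (n : ℤ) - v.i, v.j - v.i + 2 * (n : ℤ)⟩)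

/-- The vertex equivalence relation `∼` on the vertices of `Γ̃_n`. -/
def vEquiv (n : ℕ) : Vtx → Vtx → Prop := Relation.EqvGen (vBase n)

/-- The generating relation of the equivalence `∼` on the plane `B` (parameter `δ`):
`(x,y,z) ∼ (y-2δ, x-δ, z+3δ)`. -/
def pBase (δ : ℝ) (p q : Pt) : Prop := q = (p.2.1 - 2 * δ, p.1 - δ, p.2.2 + 3 * δ)

/-- The equivalence relation `∼` on the plane `B` (parameter `δ`). -/
def pEquiv (δ : ℝ) : Pt → Pt → Prop := Relation.EqvGen (pBase δ)

/-- A Möbius honeycomb for the parameter `δ`: a configuration of the Möbius honeycomb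
tinkertoy `τ̃_n` (condition MH1), satisfying the boundary conditions (MH2) and the
equivariance condition (MH3).  (We normalize the map to vanish off `Γ̃_n` so that it
faithfully encodes a map `V_{Γ̃_n} → B`.) -/
def IsMobius (n : ℕ) (δ : ℝ) (f : Vtx → Pt) : Prop :=
  -- the image lies in the plane B
  (∀ v, inGamma n v → planeB (f v)) ∧
  -- (MH1) configuration condition
  (∀ t h d, AmbEdge t h d → inGamma n t → inGamma n h →
    ∃ a : ℝ, 0 ≤ a ∧ f h - f t = a • d) ∧
  -- (MH2) boundary conditions
  (∀ j : ℤ, 1 ≤ j → j ≤ (n : ℤ) → ∃ ξ : ℝ, 4 * δ ≤ ξ ∧ ξ ≤ 5 * δ ∧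
    f ⟨VK.A, 0, j⟩ = (-(2 * δ), 2 * δ - ξ, ξ)) ∧
  (∀ j : ℤ, (n : ℤ) + 1 ≤ j → j ≤ 2 * (n : ℤ) → ∃ ξ : ℝ, 2 * δ ≤ ξ ∧ ξ ≤ 3 * δ ∧
    f ⟨VK.A, 0, j⟩ = (-δ, δ - ξ, ξ)) ∧
  (∀ j : ℤ, 2 * (n : ℤ) + 1 ≤ j → j ≤ 3 * (n : ℤ) → ∃ ξ : ℝ, 0 ≤ ξ ∧ ξ ≤ δ ∧
    f ⟨VK.A, 0, j⟩ = (0, -ξ, ξ)) ∧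
  -- (MH3) equivariance
  (∀ v w, inGamma n v → inGamma n w → vEquiv n v w → pEquiv δ (f v) (f w)) ∧
  -- normalization off Γ̃_n
  (∀ v, ¬ inGamma n v → f v = 0)

/-- `MBdryEq n f ξ` says that the boundary `∂f` of the Möbius honeycomb `f` equals
`(ξ_1, …, ξ_{3n})`:  `ξ_j` is the `z`-coordinate of `f(Ã_{0,j})`. -/
def MBdryEq (n : ℕ) (f : Vtx → Pt) (ξ : Fin (3 * n) → ℝ) : Prop :=
  ∀ j : Fin (3 * n), (f ⟨VK.A, 0, (j : ℤ) + 1⟩).2.2 = ξ j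

/-! ### Edges of `Γ̃_n`, constant coordinates, lengths, perimeters -/

/-- The three kinds of edges of `Γ_∞` (labelled by the tail `Ã`-vertex). -/
inductive EK : Type
  | ne | sw | se
deriving DecidableEq

/-- An edge of `Γ_∞`, recorded by its kind and its tail `Ã_{i,j}`. -/
structure Edg : Type where
  k : EK
  i : ℤ
  j : ℤ
deriving DecidableEq

/-- The tail of an edge. -/
def Edg.tl (e : Edg) : Vtx := ⟨VK.A, e.i, e.j⟩

/-- The head of an edge. -/
def Edg.hd (e : Edg) : Vtx :=
  match e.k with
  | EK.ne => ⟨VK.B, e.i, e.j⟩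
  | EK.sw => ⟨VK.B, e.i - 1, e.j⟩
  | EK.se => ⟨VK.B, e.i - 1, e.j - 1⟩

/-- The direction of an edge. -/
def Edg.dir (e : Edg) : Pt :=
  match e.k with
  | EK.ne => (-1, 1, 0)
  | EK.sw => (1, 0, -1)
  | EK.se => (0, -1, 1)

/-- The edge belongs to `Γ̃_n` (both endpoints do). -/
def edgValid (n : ℕ) (e : Edg) : Prop := inGamma n e.tl ∧ inGamma n e.hd

/-- Edge equivalence `≡` on the edges of `Γ̃_n`: the endpoint pairs correspond under
the vertex equivalence `∼`, in either order.  Equivalent edges have the same image in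
the quotient graph `Γ_n`. -/
def edgEquiv (n : ℕ) (e e' : Edg) : Prop :=
  (vEquiv n e.tl e'.tl ∧ vEquiv n e.hd e'.hd) ∨
  (vEquiv n e.tl e'.hd ∧ vEquiv n e.hd e'.tl)

/-- The constant coordinate `const(f; e)` of the line containing the image of the
edge `e`: the `x`-coordinate if `d(e) = (0,-1,1)`, the `y`-coordinate if
`d(e) = (1,0,-1)`, the `z`-coordinate if `d(e) = (-1,1,0)`. -/
def constOf (f : Vtx → Pt) (e : Edg) : ℝ :=
  match e.k with
  | EK.ne => (f e.tl).2.2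
  | EK.sw => (f e.tl).2.1
  | EK.se => (f e.tl).1

/-- The length `length(f; e)` of the image of the edge `e`, in the normalized metric
`l((x,y,z), (x',y',z')) = (1/√2)·√((x-x')² + (y-y')² + (z-z')²)` on the plane `B`. -/
noncomputable def lengthOf (f : Vtx → Pt) (e : Edg) : ℝ :=
  (1 / Real.sqrt 2) *
    Real.sqrt (((f e.hd).1 - (f e.tl).1) ^ 2 + ((f e.hd).2.1 - (f e.tl).2.1) ^ 2 +
      ((f e.hd).2.2 - (f e.tl).2.2) ^ 2)

/-- The perimeter `perimeter(f; α̃_{i,j})` of the hexagon `α̃_{i,j}`: the sum of the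
lengths of its six surrounding edges. -/
noncomputable def perim (f : Vtx → Pt) (i j : ℤ) : ℝ :=
  lengthOf f ⟨EK.ne, i, j⟩ + lengthOf f ⟨EK.se, i + 1, j + 1⟩ +
    lengthOf f ⟨EK.sw, i + 1, j + 1⟩ + lengthOf f ⟨EK.ne, i, j + 1⟩ +
    lengthOf f ⟨EK.se, i, j + 1⟩ + lengthOf f ⟨EK.sw, i, j⟩

/-! ### Hexagons of `Γ_n`, weights, weighted perimeters, largest-lifts -/

/-- The index set `{(i,j) : 1 ≤ i ≤ n-1, 1 ≤ j ≤ n+i}` of the hexagons of `Γ_n`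
(a fundamental domain for the hexagons of `Γ̃_n` modulo equivalence). -/
noncomputable def hexFinset (n : ℕ) : Finset (ℤ × ℤ) :=
  ((Finset.Icc 1 ((n : ℤ) - 1)) ×ˢ (Finset.Icc 1 (2 * (n : ℤ) - 1))).filter
    (fun p => p.2 ≤ (n : ℤ) + p.1)

/-- The generating relation of hexagon equivalence: `α̃_{i,j} ∼ α̃_{n-i, j-i+2n}`. -/
def hexBase (n : ℕ) (p q : ℤ × ℤ) : Prop := q = ((n : ℤ) - p.1, p.2 - p.1 + 2 * (n : ℤ))

/-- Hexagon equivalence: hexagons of `Γ̃_n` with the same image in `Γ_n`. -/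
def hexEquiv (n : ℕ) : ℤ × ℤ → ℤ × ℤ → Prop := Relation.EqvGen (hexBase n)

/-- Two hexagons of `Γ̃_n` sharing an edge. -/
def hexNbr (p q : ℤ × ℤ) : Prop :=
  q = (p.1, p.2 + 1) ∨ q = (p.1, p.2 - 1) ∨ q = (p.1 + 1, p.2) ∨ q = (p.1 - 1, p.2) ∨
    q = (p.1 + 1, p.2 + 1) ∨ q = (p.1 - 1, p.2 - 1)

/-- The hexagon index is in the range `1 ≤ i ≤ n-1` of hexagons of `Γ̃_n`. -/
def hexInRange (n : ℕ) (p : ℤ × ℤ) : Prop := 1 ≤ p.1 ∧ p.1 ≤ (n : ℤ) - 1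

/-- Adjacency of hexagons of the quotient graph `Γ_n`:
some representatives share an edge in `Γ̃_n`. -/
def hexAdjQ (n : ℕ) (p q : ℤ × ℤ) : Prop :=
  ∃ p' q', hexInRange n p' ∧ hexInRange n q' ∧ hexEquiv n p p' ∧ hexEquiv n q q' ∧ hexNbr p' q'

/-- The weighted perimeter `wperim(f) = ∑_{α ∈ H_{Γ_n}} w(α) · perimeter(f; α̃)`. -/
noncomputable def wperimOf (n : ℕ) (w : ℤ × ℤ → ℝ) (f : Vtx → Pt) : ℝ :=
  ∑ p ∈ hexFinset n, w p * perim f p.1 p.2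

/-- A weight function on the hexagons of `Γ_n` (encoded on hexagon indices, constant
on equivalence classes) such that each value is strictly greater than one sixth of the
sum of the values at the adjacent hexagons of `Γ_n`. -/
def GoodWeight (n : ℕ) (w : ℤ × ℤ → ℝ) : Prop :=
  (∀ p q, hexEquiv n p q → w p = w q) ∧
  ∀ p ∈ hexFinset n,
    (1 / 6 : ℝ) *
        ∑ q ∈ (hexFinset n).filter (fun q => hexAdjQ n p q ∧ ¬ hexEquiv n p q), w q
      < w p

/-- `f` is a largest-lift of `ξ`:  `f ∈ MÖBIUS(τ̃_n, δ)`, `∂f = ξ`, and for some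
weight function `w` as in \eqref{eqn4.6}, `f` strictly maximizes the weighted
perimeter among Möbius honeycombs with boundary `ξ`. -/
def IsLargestLift (n : ℕ) (δ : ℝ) (ξ : Fin (3 * n) → ℝ) (f : Vtx → Pt) : Prop :=
  IsMobius n δ f ∧ MBdryEq n f ξ ∧
  ∃ w : ℤ × ℤ → ℝ, GoodWeight n w ∧
    ∀ g : Vtx → Pt, IsMobius n δ g → MBdryEq n g ξ → g ≠ f →
      wperimOf n w g < wperimOf n w f

/-! Along an edge of a configuration the image is a nonnegative multiple `a • d` of the
direction `d`, which has `l`-length one, so the edge has length exactly `a`. Hence edge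
lengths, perimeters and weighted perimeters are affine under nonnegative combinations of
configurations, and a strict maximizer of the weighted perimeter cannot be a proper convex
combination of two other lifts. -/

/-- Condition (MH1) on the edges of `Γ̃_n`. -/
def IsConfiguration (n : ℕ) (f : Vtx → Pt) : Prop :=
  ∀ t h d, AmbEdge t h d → inGamma n t → inGamma n h → ∃ a : ℝ, 0 ≤ a ∧ f h - f t = a • d

theorem IsMobius.isConfiguration {n : ℕ} {δ : ℝ} {f : Vtx → Pt} (hf : IsMobius n δ f) :
    IsConfiguration n f :=
  hf.2.1

theorem Edg.ambEdge (e : Edg) : AmbEdge e.tl e.hd e.dir := by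
  rcases e with ⟨_ | _ | _, i, j⟩
  exacts [AmbEdge.ne i j, AmbEdge.sw i j, AmbEdge.se i j]

theorem lengthOf_eq_of_sub_eq_smul_dir {f : Vtx → Pt} {e : Edg} {a : ℝ} (ha : 0 ≤ a)
    (h : f e.hd - f e.tl = a • e.dir) : lengthOf f e = a := by
  have hsq : ((f e.hd).1 - (f e.tl).1) ^ 2 + ((f e.hd).2.1 - (f e.tl).2.1) ^ 2 +
      ((f e.hd).2.2 - (f e.tl).2.2) ^ 2 = 2 * a ^ 2 := by
    rw [Prod.ext_iff, Prod.ext_iff] at h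
    rcases e with ⟨_ | _ | _, i, j⟩ <;>
    · simp only [Edg.dir, Prod.fst_sub, Prod.snd_sub, Prod.smul_mk, smul_eq_mul] at h
      obtain ⟨h₁, h₂, h₃⟩ := h
      rw [h₁, h₂, h₃]
      ring
  rw [lengthOf, hsq, Real.sqrt_mul zero_le_two, Real.sqrt_sq ha]
  field_simp

theorem IsConfiguration.lengthOf_smul_add {n : ℕ} {f₁ f₂ : Vtx → Pt}
    (h₁ : IsConfiguration n f₁) (h₂ : IsConfiguration n f₂) {c₁ c₂ : ℝ}
    (hc₁ : 0 ≤ c₁) (hc₂ : 0 ≤ c₂) {e : Edg} (he : edgValid n e) :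
    lengthOf (fun v => c₁ • f₁ v + c₂ • f₂ v) e = c₁ * lengthOf f₁ e + c₂ * lengthOf f₂ e := by
  obtain ⟨a₁, ha₁, hd₁⟩ := h₁ _ _ _ e.ambEdge he.1 he.2
  obtain ⟨a₂, ha₂, hd₂⟩ := h₂ _ _ _ e.ambEdge he.1 he.2
  have hd : c₁ • f₁ e.hd + c₂ • f₂ e.hd - (c₁ • f₁ e.tl + c₂ • f₂ e.tl)
      = (c₁ * a₁ + c₂ * a₂) • e.dir := by
    rw [add_smul, mul_smul, mul_smul, ← hd₁, ← hd₂]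
    module
  rw [lengthOf_eq_of_sub_eq_smul_dir (by positivity) hd,
    lengthOf_eq_of_sub_eq_smul_dir ha₁ hd₁, lengthOf_eq_of_sub_eq_smul_dir ha₂ hd₂]

theorem edgValid_mk {n : ℕ} {i : ℤ} (hi₁ : 1 ≤ i) (hi₂ : i ≤ n) (k : EK) (j : ℤ) :
    edgValid n ⟨k, i, j⟩ := by
  cases k <;>
  · simp only [edgValid, inGamma, Edg.tl, Edg.hd]
    omega

theorem IsConfiguration.perim_smul_add {n : ℕ} {f₁ f₂ : Vtx → Pt}
    (h₁ : IsConfiguration n f₁) (h₂ : IsConfiguration n f₂) {c₁ c₂ : ℝ}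
    (hc₁ : 0 ≤ c₁) (hc₂ : 0 ≤ c₂) {i : ℤ} (hi : i ∈ Finset.Icc 1 ((n : ℤ) - 1)) (j : ℤ) :
    perim (fun v => c₁ • f₁ v + c₂ • f₂ v) i j = c₁ * perim f₁ i j + c₂ * perim f₂ i j := by
  rw [Finset.mem_Icc] at hi
  have hv₀ := edgValid_mk (n := n) hi.1 (by omega)
  have hv₁ := edgValid_mk (n := n) (i := i + 1) (by omega) (by omega)
  simp only [perim, h₁.lengthOf_smul_add h₂ hc₁ hc₂ (hv₀ _ _),
    h₁.lengthOf_smul_add h₂ hc₁ hc₂ (hv₁ _ _)]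
  ring

theorem IsConfiguration.wperimOf_smul_add {n : ℕ} {f₁ f₂ : Vtx → Pt}
    (h₁ : IsConfiguration n f₁) (h₂ : IsConfiguration n f₂) {c₁ c₂ : ℝ}
    (hc₁ : 0 ≤ c₁) (hc₂ : 0 ≤ c₂) (w : ℤ × ℤ → ℝ) :
    wperimOf n w (fun v => c₁ • f₁ v + c₂ • f₂ v)
      = c₁ * wperimOf n w f₁ + c₂ * wperimOf n w f₂ := by
  simp only [wperimOf, Finset.mul_sum, ← Finset.sum_add_distrib]
  refine Finset.sum_congr rfl fun p hp => ?_
  have hp₁ : p.1 ∈ Finset.Icc 1 ((n : ℤ) - 1) :=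
    (Finset.mem_product.1 (Finset.mem_filter.1 hp).1).1
  rw [h₁.perim_smul_add h₂ hc₁ hc₂ hp₁]
  ring

theorem largest_lift_extreme_general (n : ℕ) (δ : ℕ) (ξ : Fin (3 * n) → ℝ)
    (f : Vtx → Pt) (hf : IsLargestLift n (δ : ℝ) ξ f)
    (f₁ f₂ : Vtx → Pt) (h₁ : IsMobius n (δ : ℝ) f₁) (h₂ : IsMobius n (δ : ℝ) f₂)
    (hb₁ : MBdryEq n f₁ ξ) (hb₂ : MBdryEq n f₂ ξ)
    (c₁ c₂ : ℝ) (hc₁ : 0 ≤ c₁) (hc₂ : 0 ≤ c₂) (hsum : c₁ + c₂ = 1)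
    (hcomb : f = fun v => c₁ • f₁ v + c₂ • f₂ v) :
    f = f₁ ∨ f = f₂ := by
  obtain ⟨-, -, w, -, hmax⟩ := hf
  by_contra! hne
  have hlt : c₁ • wperimOf n w f₁ + c₂ • wperimOf n w f₂ < wperimOf n w f :=
    Set.mem_Iio.1 <| convex_Iio _ (hmax f₁ h₁ hb₁ hne.1.symm) (hmax f₂ h₂ hb₂ hne.2.symm)
      hc₁ hc₂ hsum
  have heq : wperimOf n w f = c₁ * wperimOf n w f₁ + c₂ * wperimOf n w f₂ :=
    hcomb ▸ h₁.isConfiguration.wperimOf_smul_add h₂.isConfiguration hc₁ hc₂ w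
  simp only [smul_eq_mul] at hlt
  linarith

/-- **Lemma 3.4 (first part)**: a largest-lift `h̃` of `ξ ∈ BDRY(τ̃_n, δ)` is an
extreme point: if `h̃ = c₁·h̃₁ + c₂·h̃₂` with `h̃₁, h̃₂ ∈ ∂⁻¹(ξ)`, `c₁, c₂ ≥ 0` and
`c₁ + c₂ = 1`, then `h̃ = h̃₁` or `h̃ = h̃₂`. -/
theorem largest_lift_extreme (n : ℕ) (δ : ℕ) (hδ : 0 < δ) (ξ : Fin (3 * n) → ℝ)
    (f : Vtx → Pt) (hf : IsLargestLift n (δ : ℝ) ξ f)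
    (f₁ f₂ : Vtx → Pt) (h₁ : IsMobius n (δ : ℝ) f₁) (h₂ : IsMobius n (δ : ℝ) f₂)
    (hb₁ : MBdryEq n f₁ ξ) (hb₂ : MBdryEq n f₂ ξ)
    (c₁ c₂ : ℝ) (hc₁ : 0 ≤ c₁) (hc₂ : 0 ≤ c₂) (hsum : c₁ + c₂ = 1)
    (hcomb : f = fun v => c₁ • f₁ v + c₂ • f₂ v) :
    f = f₁ ∨ f = f₂ :=
  largest_lift_extreme_general n δ ξ f hf f₁ f₂ h₁ h₂ hb₁ hb₂ c₁ c₂ hc₁ hc₂ hsum hcomb
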